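/- arXiv:2008.01465 — 2 statements merged into one kernel-verified Lean document; each statement's English description precedes it below -/
import Mathlib

section
/- Fix d ≥ 1 and consider the condition-length function lc on tuples of control points P = (P₀,…,P_d) ∈ (ℝ²)^{d+1}, defined by lc(P) = ∫₀¹ ‖∂ₜB(P,t)‖ / √|B₁(P,t)² − 4B₂(P,t)| dt, where B(P,t) = Σᵢ₌₀^d C(d,i)(1−t)^{d−i}tⁱ Pᵢ = (B₁(P,t), B₂(P,t)). Then lc is differentiable (as a function of the coordinates of P₀,…,P_d) at every point P such that for all t ∈ [0,1] one has ∂ₜB(P,t) ≠ 0 and B₁(P,t)² ≠ 4B₂(P,t). -/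
/-- The degree-`d` Bézier curve in the space `ℝ²` of monic real quadratics
(identified via `x² + bx + c ↦ (b,c)`), with control points `P₀, …, P_d`. -/
noncomputable def bezier (d : ℕ) (P : Fin (d + 1) → EuclideanSpace ℝ (Fin 2)) (t : ℝ) :
    EuclideanSpace ℝ (Fin 2) :=
  ∑ i : Fin (d + 1), ((d.choose (i : ℕ) : ℝ) * (1 - t) ^ (d - (i : ℕ)) * t ^ (i : ℕ)) • P i

/-- The condition length `lc(P) = ∫₀¹ ‖∂ₜB(P,t)‖ / √|B₁(P,t)² − 4B₂(P,t)| dt`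
of the degree-`d` Bézier curve with control points `P`. -/
noncomputable def conditionLength (d : ℕ) (P : Fin (d + 1) → EuclideanSpace ℝ (Fin 2)) : ℝ :=
  ∫ t in (0:ℝ)..1,
    ‖deriv (bezier d P) t‖ / Real.sqrt |(bezier d P t 0) ^ 2 - 4 * bezier d P t 1|

/-!
The integrand `‖∂ₜB(P,t)‖ / √|B₁(P,t)² − 4B₂(P,t)|` is a C¹ function of `(P, t)` wherever the
velocity and the discriminant do not vanish, since `B` is polynomial in `(P, t)` and the norm,
`|·|` and `√·` are smooth away from `0`. By compactness of `{P} × [0,1]` a tube around it stays in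
that region with a uniform bound on the derivative, and differentiation under the integral sign
applies.
-/

open Metric Set

section ParametricIntegral

variable {X : Type*} [PseudoMetricSpace X]

theorem IsCompact.exists_thickening_subset_open_with_bound {K U : Set X} {f : X → ℝ}
    (hK : IsCompact K) (hU : IsOpen U) (hKU : K ⊆ U) (hf : ContinuousOn f U) :
    ∃ δ > 0, ∃ C, ∀ y ∈ thickening δ K, y ∈ U ∧ f y ≤ C := by
  obtain ⟨C, hC⟩ := hK.exists_bound_of_continuousOn (hf.mono hKU)
  have hV : IsOpen (U ∩ f ⁻¹' Iio (C + 1)) := hf.isOpen_inter_preimage hU isOpen_Iio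
  have hKV : K ⊆ U ∩ f ⁻¹' Iio (C + 1) := fun y hy =>
    ⟨hKU hy, (Real.le_norm_self _).trans_lt (by linarith [hC y hy])⟩
  obtain ⟨δ, hδ, hδV⟩ := hK.exists_thickening_subset_open hV hKV
  exact ⟨δ, hδ, C + 1, fun y hy => ⟨(hδV hy).1, (hδV hy).2.le⟩⟩

theorem ContinuousOn.comp_prodMk_left {Y Z W : Type*} [TopologicalSpace Y] [TopologicalSpace Z]
    [TopologicalSpace W] {g : Y × Z → W} {U : Set (Y × Z)} {S : Set Z} {y : Y}
    (hg : ContinuousOn g U) (hy : ∀ z ∈ S, (y, z) ∈ U) : ContinuousOn (fun z => g (y, z)) S :=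
  hg.comp (Continuous.prodMk continuous_const continuous_id).continuousOn hy

variable {E F : Type*} [NormedAddCommGroup E] [NormedSpace ℝ E]
  [NormedAddCommGroup F] [NormedSpace ℝ F]

theorem hasFDerivAt_intervalIntegral_of_contDiffOn {G : E × ℝ → F} {U : Set (E × ℝ)} {x₀ : E}
    {a b : ℝ} (hU : IsOpen U) (hG : ContDiffOn ℝ 1 G U) (hx₀ : ∀ t ∈ uIcc a b, (x₀, t) ∈ U) :
    HasFDerivAt (fun x => ∫ t in a..b, G (x, t))
      (∫ t in a..b, (fderiv ℝ G (x₀, t)).comp (ContinuousLinearMap.inl ℝ E ℝ)) x₀ := by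
  set G' : E × ℝ → E →L[ℝ] F := fun y => (fderiv ℝ G y).comp (ContinuousLinearMap.inl ℝ E ℝ)
  have hG' : ContinuousOn G' U :=
    (hG.continuousOn_fderiv_of_isOpen hU le_rfl).clm_comp continuousOn_const
  obtain ⟨δ, hδ, C, hC⟩ :=
    (isCompact_singleton.prod isCompact_uIcc).exists_thickening_subset_open_with_bound hU
      (by rintro ⟨x, t⟩ ⟨rfl, ht⟩; exact hx₀ t ht) hG'.norm
  have tube : ∀ x ∈ ball x₀ δ, ∀ t ∈ uIcc a b, (x, t) ∈ U ∧ ‖G' (x, t)‖ ≤ C := fun x hx t ht =>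
    hC _ (mem_thickening_iff.2 ⟨(x₀, t), ⟨rfl, ht⟩, by simpa [Prod.dist_eq] using hx⟩)
  refine intervalIntegral.hasFDerivAt_integral_of_dominated_of_fderiv_le (bound := fun _ => C)
    (F' := fun x t => G' (x, t)) (ball_mem_nhds x₀ hδ) ?_
    (hG.continuousOn.comp_prodMk_left hx₀).intervalIntegrable
    (((hG'.comp_prodMk_left hx₀).mono uIoc_subset_uIcc).aestronglyMeasurable measurableSet_uIoc)
    ?_ intervalIntegrable_const ?_
  · filter_upwards [ball_mem_nhds x₀ hδ] with x hx
    exact ((hG.continuousOn.comp_prodMk_left fun t ht => (tube x hx t ht).1).mono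
      uIoc_subset_uIcc).aestronglyMeasurable measurableSet_uIoc
  · exact Filter.Eventually.of_forall fun t ht x hx => (tube x hx t (uIoc_subset_uIcc ht)).2
  · refine Filter.Eventually.of_forall fun t ht x hx => ?_
    have hxt := (tube x hx t (uIoc_subset_uIcc ht)).1
    exact (((hG.contDiffAt (hU.mem_nhds hxt)).differentiableAt one_ne_zero).hasFDerivAt).comp x
      (hasFDerivAt_prodMk_left x t)

end ParametricIntegral

theorem ContDiffAt.norm_div_sqrt_abs {E V : Type*} [NormedAddCommGroup E] [NormedSpace ℝ E]
    [NormedAddCommGroup V] [InnerProductSpace ℝ V] {v : E → V} {q : E → ℝ} {x : E}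
    {n : ℕ∞} (hv : ContDiffAt ℝ n v x) (hq : ContDiffAt ℝ n q x) (hv₀ : v x ≠ 0)
    (hq₀ : q x ≠ 0) : ContDiffAt ℝ n (fun y => ‖v y‖ / √|q y|) x :=
  (hv.norm ℝ hv₀).div ((Real.contDiffAt_sqrt (abs_ne_zero.2 hq₀)).comp x (hq.abs hq₀))
    (Real.sqrt_pos.2 (abs_pos.2 hq₀)).ne'

noncomputable def monicDiscrim (p : EuclideanSpace ℝ (Fin 2)) : ℝ := p 0 ^ 2 - 4 * p 1

theorem contDiff_monicDiscrim : ContDiff ℝ ⊤ monicDiscrim := by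
  unfold monicDiscrim; fun_prop

section Bezier

variable (d : ℕ)

theorem contDiff_bezier_uncurry : ContDiff ℝ ⊤ (Function.uncurry (bezier d)) := by
  unfold Function.uncurry bezier; fun_prop

theorem contDiff_deriv_bezier_uncurry :
    ContDiff ℝ 1 fun x : (Fin (d + 1) → EuclideanSpace ℝ (Fin 2)) × ℝ => deriv (bezier d x.1) x.2 :=
  (((contDiff_bezier_uncurry d).comp (contDiff_fst.fst.prodMk contDiff_snd)).fderiv
    (f := fun x : (Fin (d + 1) → EuclideanSpace ℝ (Fin 2)) × ℝ => bezier d x.1) contDiff_snd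
    le_top).clm_apply contDiff_const

noncomputable def conditionIntegrand (x : (Fin (d + 1) → EuclideanSpace ℝ (Fin 2)) × ℝ) : ℝ :=
  ‖deriv (bezier d x.1) x.2‖ / √|monicDiscrim (bezier d x.1 x.2)|

theorem contDiffAt_conditionIntegrand {x : (Fin (d + 1) → EuclideanSpace ℝ (Fin 2)) × ℝ}
    (hv : deriv (bezier d x.1) x.2 ≠ 0) (hq : monicDiscrim (bezier d x.1 x.2) ≠ 0) :
    ContDiffAt ℝ 1 (conditionIntegrand d) x :=
  (contDiff_deriv_bezier_uncurry d).contDiffAt.norm_div_sqrt_abs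
    ((contDiff_monicDiscrim.comp (contDiff_bezier_uncurry d)).contDiffAt.of_le le_top) hv hq

theorem conditionLength_eq_integral_conditionIntegrand :
    conditionLength d = fun P => ∫ t in (0 : ℝ)..1, conditionIntegrand d (P, t) :=
  rfl

end Bezier

theorem stmt_5_general (d : ℕ) (P : Fin (d + 1) → EuclideanSpace ℝ (Fin 2))
    (h₁ : ∀ t ∈ Set.Icc (0:ℝ) 1, deriv (bezier d P) t ≠ 0)
    (h₂ : ∀ t ∈ Set.Icc (0:ℝ) 1, (bezier d P t 0) ^ 2 ≠ 4 * bezier d P t 1) :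
    DifferentiableAt ℝ (conditionLength d) P := by
  set U : Set ((Fin (d + 1) → EuclideanSpace ℝ (Fin 2)) × ℝ) :=
    {x | deriv (bezier d x.1) x.2 ≠ 0 ∧ monicDiscrim (bezier d x.1 x.2) ≠ 0}
  have hU : IsOpen U :=
    (isOpen_ne_fun (contDiff_deriv_bezier_uncurry d).continuous continuous_const).inter
      (isOpen_ne_fun (contDiff_monicDiscrim.comp (contDiff_bezier_uncurry d)).continuous
        continuous_const)
  have hG : ContDiffOn ℝ 1 (conditionIntegrand d) U := fun x hx =>
    (contDiffAt_conditionIntegrand d hx.1 hx.2).contDiffWithinAt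
  have hPU : ∀ t ∈ uIcc 0 1, (P, t) ∈ U := fun t ht => by
    rw [uIcc_of_le zero_le_one] at ht
    exact ⟨h₁ t ht, sub_ne_zero.2 (h₂ t ht)⟩
  rw [conditionLength_eq_integral_conditionIntegrand]
  exact (hasFDerivAt_intervalIntegral_of_contDiffOn hU hG hPU).differentiableAt

/-- The condition-length function `lc` is differentiable with respect to the coordinates
of the control points at every `P` such that, for all `t ∈ [0,1]`, `∂ₜB(P,t) ≠ 0` and
`B₁(P,t)² ≠ 4B₂(P,t)` (the curve stays off the discriminant locus). -/
theorem stmt_5 (d : ℕ) (hd : 1 ≤ d) (P : Fin (d + 1) → EuclideanSpace ℝ (Fin 2))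
    (h₁ : ∀ t ∈ Set.Icc (0:ℝ) 1, deriv (bezier d P) t ≠ 0)
    (h₂ : ∀ t ∈ Set.Icc (0:ℝ) 1, (bezier d P t 0) ^ 2 ≠ 4 * bezier d P t 1) :
    DifferentiableAt ℝ (conditionLength d) P :=
  stmt_5_general d P h₁ h₂
end

section
/- Let n ≥ 1 and let a : ℝ → ℂⁿ, t ↦ (a₀(t),…,a_{n−1}(t)), be continuously differentiable, defining the C¹ family of monic polynomials p_t(z) = zⁿ + a_{n−1}(t)z^{n−1} + … + a₁(t)z + a₀(t). Assume that for every t ∈ [0,1] the polynomial p_t is separable (has no repeated complex root), i.e. the path avoids the discriminant locus Σ. Then for every z₀ ∈ ℂ with p₀(z₀) = 0 there exists a unique continuous function z : [0,1] → ℂ with z(0) = z₀ and p_t(z(t)) = 0 for all t ∈ [0,1]; moreover this function z is continuously differentiable and satisfies z′(t) = −(∂p_t/∂t)(z(t)) / p_t′(z(t)). -/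
/-!
The incidence set `Z = {(t, z) ∈ [0,1] × ℂ | p_t(z) = 0}` is compact, since the roots of a monic
polynomial are bounded by `max 1 (∑ ‖aᵢ‖)`. By the implicit function theorem, separability makes
`Z` near each of its points the graph of a function of `t`, differentiable with derivative
`-(∂p_t/∂t) / p_t′`. So the projection `Z → [0,1]` is a local homeomorphism from a compact space,
hence a covering map, and the identity path of `[0,1]` lifts uniquely through `(0, z₀)`. Near each
time the lift coincides with an implicit branch, which gives its derivative.
-/

open Filter Topology Set unitInterval

theorem isLocalHomeomorph_of_isOpenMap_of_isLocallyInjective {X Y : Type*} [TopologicalSpace X]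
    [TopologicalSpace Y] {f : X → Y} (hc : Continuous f) (ho : IsOpenMap f)
    (hi : IsLocallyInjective f) : IsLocalHomeomorph f := by
  refine isLocalHomeomorph_iff_isOpenEmbedding_restrict.2 fun x => ?_
  obtain ⟨U, hU, hxU, hinj⟩ := hi x
  exact ⟨U, hU.mem_nhds hxU, .of_continuous_injective_isOpenMap (hc.comp continuous_subtype_val)
    hinj.injective (ho.comp hU.isOpenMap_subtype_val)⟩

section LocallyGraph

variable {X Y : Type*} [TopologicalSpace X] [TopologicalSpace Y]

def IsLocallyGraph (Z : Set (X × Y)) : Prop :=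
  ∀ q ∈ Z, ∃ ψ : X → Y, ψ q.1 = q.2 ∧ ContinuousAt ψ q.1 ∧ ∀ᶠ v in 𝓝 q, v ∈ Z ↔ ψ v.1 = v.2

namespace IsLocallyGraph

variable {Z : Set (X × Y)}

theorem isLocallyInjective_fst (hZ : IsLocallyGraph Z) :
    IsLocallyInjective fun q : Z => q.1.1 := by
  refine isLocallyInjective_iff_nhds.2 fun q => ?_
  obtain ⟨ψ, -, -, hev⟩ := hZ q.1 q.2
  refine ⟨Subtype.val ⁻¹' {v | v ∈ Z ↔ ψ v.1 = v.2},
    continuous_subtype_val.continuousAt.preimage_mem_nhds hev, fun q₁ h₁ q₂ h₂ he => ?_⟩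
  have he : q₁.1.1 = q₂.1.1 := he
  exact Subtype.ext (Prod.ext he ((h₁.1 q₁.2).symm.trans (he ▸ h₂.1 q₂.2)))

theorem isOpenMap_fst (hZ : IsLocallyGraph Z) : IsOpenMap fun q : Z => q.1.1 := by
  refine isOpenMap_iff_nhds_le.2 fun q U hU => ?_
  obtain ⟨V, hV, hVU⟩ := mem_nhds_subtype Z q _ |>.1 (mem_map.1 hU)
  obtain ⟨ψ, hψ, hψc, hev⟩ := hZ q.1 q.2
  have hgraph : Tendsto (fun x => (x, ψ x)) (𝓝 q.1.1) (𝓝 q.1) := by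
    simpa [hψ] using (continuousAt_id.prodMk hψc).tendsto
  filter_upwards [hgraph.eventually (inter_mem hV hev)] with x ⟨hxV, hxZ⟩
  exact hVU (a := ⟨(x, ψ x), hxZ.2 rfl⟩) hxV

theorem isLocalHomeomorph_fst (hZ : IsLocallyGraph Z) : IsLocalHomeomorph fun q : Z => q.1.1 :=
  isLocalHomeomorph_of_isOpenMap_of_isLocallyInjective (by fun_prop) hZ.isOpenMap_fst
    hZ.isLocallyInjective_fst

theorem isCoveringMap_fst [T2Space X] [T2Space Y] (hZ : IsLocallyGraph Z) (hc : IsCompact Z) :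
    IsCoveringMap fun q : Z => q.1.1 :=
  have := isCompact_iff_compactSpace.1 hc
  isLocalHomeomorph_iff_isCoveringMap.1 hZ.isLocalHomeomorph_fst

theorem exists_unique_path [T2Space Y] {R : ℝ → Y → Prop}
    (hZ : IsLocallyGraph {q : I × Y | R q.1 q.2}) (hK : IsCompact {q : I × Y | R q.1 q.2})
    {y₀ : Y} (h₀ : R 0 y₀) :
    ∃ z : ℝ → Y,
      (ContinuousOn z (Icc 0 1) ∧ z 0 = y₀ ∧ ∀ t ∈ Icc (0 : ℝ) 1, R t (z t)) ∧
      ∀ w : ℝ → Y, ContinuousOn w (Icc 0 1) → w 0 = y₀ →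
        (∀ t ∈ Icc (0 : ℝ) 1, R t (w t)) → EqOn w z (Icc 0 1) := by
  have cov := hZ.isCoveringMap_fst hK
  obtain ⟨Γ, hΓ, hΓ₀⟩ := cov.exists_path_lifts (ContinuousMap.id I) ⟨(0, y₀), h₀⟩ rfl
  have hΓfst (s : I) : (Γ s).1.1 = s := congrFun hΓ s
  refine ⟨fun t => (Γ (projIcc 0 1 zero_le_one t)).1.2,
    ⟨by fun_prop, ?_, fun t ht => ?_⟩, ?_⟩
  · simp [hΓ₀]
  · have h := (Γ ⟨t, ht⟩).2
    rw [mem_ofPred_eq, hΓfst] at h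
    simpa [projIcc_of_mem _ ht] using h
  intro w hw hw₀ hwR t ht
  let Γw : C(I, {q : I × Y | R q.1 q.2}) :=
    ⟨fun s => ⟨(s, w s), hwR s s.2⟩, (continuous_id.prodMk hw.domRestrict).subtype_mk _⟩
  have := cov.eq_of_comp_eq Γw.continuous Γ.continuous (funext fun s => (hΓfst s).symm) 0
    (hΓ₀ ▸ Subtype.ext (Prod.ext rfl hw₀))
  calc w t = (Γw ⟨t, ht⟩).1.2 := rfl
    _ = (Γ ⟨t, ht⟩).1.2 := by rw [this]
    _ = (Γ (projIcc 0 1 zero_le_one t)).1.2 := by rw [projIcc_of_mem _ ht]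

end IsLocallyGraph

end LocallyGraph

theorem exists_implicit_branch {p A B : ℝ → ℂ → ℂ}
    (hA : ∀ t z, HasDerivAt (p · z) (A t z) t) (hB : ∀ t z, HasDerivAt (p t) (B t z) z)
    {t : ℝ} {ζ : ℂ} (hAc : ContinuousAt ↿A (t, ζ)) (hBc : ContinuousAt ↿B (t, ζ))
    (hB₀ : B t ζ ≠ 0) :
    ∃ ψ : ℝ → ℂ, ψ t = ζ ∧ HasDerivAt ψ (-(A t ζ / B t ζ)) t ∧
      ∀ᶠ v in 𝓝 (t, ζ), p v.1 v.2 = p t ζ ↔ ψ v.1 = v.2 := by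
  set f₁ : ℝ → ℂ → ℝ →L[ℝ] ℂ := fun s w => (1 : ℝ →L[ℝ] ℝ).smulRight (A s w)
  set f₂ : ℝ → ℂ → ℂ →L[ℝ] ℂ :=
    fun s w => ((1 : ℂ →L[ℂ] ℂ).smulRight (B s w)).restrictScalars ℝ
  have df₁ : ∀ᶠ v : ℝ × ℂ in 𝓝 (t, ζ), HasFDerivAt (p · v.2) (f₁ v.1 v.2) v.1 :=
    .of_forall fun v => (hA v.1 v.2).hasFDerivAt
  have df₂ : ∀ᶠ v : ℝ × ℂ in 𝓝 (t, ζ), HasFDerivAt (p v.1) (f₂ v.1 v.2) v.2 :=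
    .of_forall fun v => (hB v.1 v.2).hasFDerivAt.restrictScalars ℝ
  have cf₁ : ContinuousAt ↿f₁ (t, ζ) :=
    (by fun_prop : Continuous fun x : ℂ => (1 : ℝ →L[ℝ] ℝ).smulRight x).continuousAt.comp hAc
  have cf₂ : ContinuousAt ↿f₂ (t, ζ) :=
    (by fun_prop : Continuous fun x : ℂ =>
      ((1 : ℂ →L[ℂ] ℂ).smulRight x).restrictScalars ℝ).continuousAt.comp hBc
  set e : ℂ ≃L[ℝ] ℂ :=
    (ContinuousLinearEquiv.unitsEquivAut ℂ (Units.mk0 _ hB₀)).restrictScalars ℝ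
  have he : (e : ℂ →L[ℝ] ℂ) = f₂ t ζ := by ext; simp [e, f₂]
  have inv : (f₂ (t, ζ).1 (t, ζ).2).IsInvertible := he ▸ ContinuousLinearMap.isInvertible_equiv
  refine ⟨implicitFunctionOfBivariate df₁ df₂ cf₁ cf₂ inv,
    eq_of_tendsto_nhds (tendsto_implicitFunctionOfBivariate df₁ df₂ cf₁ cf₂ inv), ?_,
    eventually_apply_eq_iff_implicitFunctionOfBivariate df₁ df₂ cf₁ cf₂ inv⟩
  refine (hasStrictFDerivAt_implicitFunctionOfBivariate df₁ df₂ cf₁ cf₂ inv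
    ).hasFDerivAt.hasDerivAt.congr_deriv ?_
  show -((f₂ t ζ).inverse (f₁ t ζ 1)) = _
  rw [← he, ContinuousLinearMap.inverse_equiv]
  simp [e, f₁, div_eq_mul_inv]

section RootPaths

variable {p A B : ℝ → ℂ → ℂ}

theorem isLocallyGraph_roots (hA : ∀ t z, HasDerivAt (p · z) (A t z) t)
    (hB : ∀ t z, HasDerivAt (p t) (B t z) z) (hAc : Continuous ↿A) (hBc : Continuous ↿B)
    (hsep : ∀ t ∈ Icc (0 : ℝ) 1, ∀ z, p t z = 0 → B t z ≠ 0) :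
    IsLocallyGraph {q : I × ℂ | p q.1 q.2 = 0} := by
  rintro ⟨t, ζ⟩ (hq : p t ζ = 0)
  obtain ⟨ψ, hψ, hψd, hev⟩ :=
    exists_implicit_branch hA hB hAc.continuousAt hBc.continuousAt (hsep t t.2 ζ hq)
  refine ⟨ψ ∘ (↑), hψ, hψd.continuousAt.comp continuous_subtype_val.continuousAt, ?_⟩
  have hcoe : Tendsto (fun v : I × ℂ => ((v.1 : ℝ), v.2)) (𝓝 (t, ζ)) (𝓝 (t, ζ)) :=
    (by fun_prop : Continuous fun v : I × ℂ => ((v.1 : ℝ), v.2)).tendsto _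
  filter_upwards [hcoe.eventually hev] with v hv
  simpa [hq] using hv

theorem hasDerivWithinAt_of_root_path (hA : ∀ t z, HasDerivAt (p · z) (A t z) t)
    (hB : ∀ t z, HasDerivAt (p t) (B t z) z) (hAc : Continuous ↿A) (hBc : Continuous ↿B)
    {z : ℝ → ℂ} {s : Set ℝ} {t : ℝ} (hz : ContinuousWithinAt z s t)
    (hroot : ∀ r ∈ s, p r (z r) = 0) (ht : t ∈ s) (hB₀ : B t (z t) ≠ 0) :
    HasDerivWithinAt z (-(A t (z t) / B t (z t))) s t := by
  obtain ⟨ψ, hψ, hψd, hev⟩ :=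
    exists_implicit_branch hA hB hAc.continuousAt hBc.continuousAt hB₀
  have hgraph : Tendsto (fun r => (r, z r)) (𝓝[s] t) (𝓝 (t, z t)) :=
    (continuousWithinAt_id.prodMk hz).tendsto
  have hzψ : z =ᶠ[𝓝[s] t] ψ := by
    filter_upwards [hgraph.eventually hev, self_mem_nhdsWithin] with r hr hrs
    exact (hr.1 (by rw [hroot r hrs, hroot t ht])).symm
  exact hψd.hasDerivWithinAt.congr_of_eventuallyEq hzψ hψ.symm

theorem contDiffOn_of_root_path (hA : ∀ t z, HasDerivAt (p · z) (A t z) t)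
    (hB : ∀ t z, HasDerivAt (p t) (B t z) z) (hAc : Continuous ↿A) (hBc : Continuous ↿B)
    {z : ℝ → ℂ} {s : Set ℝ} (hs : UniqueDiffOn ℝ s) (hz : ContinuousOn z s)
    (hroot : ∀ r ∈ s, p r (z r) = 0) (hB₀ : ∀ t ∈ s, B t (z t) ≠ 0) :
    ContDiffOn ℝ 1 z s := by
  have hderiv (t) (ht : t ∈ s) :=
    hasDerivWithinAt_of_root_path hA hB hAc hBc (hz t ht) hroot ht (hB₀ t ht)
  refine (contDiffOn_one_iff_derivWithin hs).2
    ⟨fun t ht => (hderiv t ht).differentiableWithinAt, ?_⟩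
  have hcont : ContinuousOn (fun t => -(A t (z t) / B t (z t))) s :=
    ((hAc.comp_continuousOn (continuousOn_id.prodMk hz)).div
      (hBc.comp_continuousOn (continuousOn_id.prodMk hz)) hB₀).neg
  exact hcont.congr fun t ht => (hderiv t ht).derivWithin (hs t ht)

end RootPaths

section MonicFamily

variable {n : ℕ}

theorem norm_le_of_pow_add_sum_mul_pow_eq_zero {𝕜 : Type*} [NormedField 𝕜] {c : Fin n → 𝕜}
    {ζ : 𝕜} (h : ζ ^ n + ∑ i, c i * ζ ^ (i : ℕ) = 0) : ‖ζ‖ ≤ max 1 (∑ i, ‖c i‖) := by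
  by_contra! hbig
  have h1 : 1 < ‖ζ‖ := (le_max_left _ _).trans_lt hbig
  have h2 : ∑ i, ‖c i‖ < ‖ζ‖ := (le_max_right _ _).trans_lt hbig
  have : ‖ζ‖ ^ n * ‖ζ‖ < ‖ζ‖ * ‖ζ‖ ^ n :=
    calc ‖ζ‖ ^ n * ‖ζ‖ = ‖∑ i, c i * ζ ^ (i : ℕ)‖ * ‖ζ‖ := by
          rw [← norm_pow, eq_neg_of_add_eq_zero_left h, norm_neg]
      _ ≤ (∑ i, ‖c i‖ * ‖ζ‖ ^ (i : ℕ)) * ‖ζ‖ := by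
          gcongr
          exact (norm_sum_le _ _).trans_eq (by simp only [norm_mul, norm_pow])
      _ = ∑ i, ‖c i‖ * ‖ζ‖ ^ ((i : ℕ) + 1) := by
          simp only [Finset.sum_mul, pow_succ, mul_assoc]
      _ ≤ ∑ i, ‖c i‖ * ‖ζ‖ ^ n := by gcongr with i; exacts [h1.le, i.isLt]
      _ = (∑ i, ‖c i‖) * ‖ζ‖ ^ n := (Finset.sum_mul _ _ _).symm
      _ < ‖ζ‖ * ‖ζ‖ ^ n := by gcongr
  linarith [mul_comm (‖ζ‖ ^ n) ‖ζ‖]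

theorem isCompact_roots_pow_add_sum_mul_pow {a : ℝ → Fin n → ℂ} (ha : Continuous a) :
    IsCompact {q : I × ℂ | q.2 ^ n + ∑ i, a q.1 i * q.2 ^ (i : ℕ) = 0} := by
  obtain ⟨C, hC⟩ :=
    (isCompact_range (by fun_prop : Continuous fun t : I => ∑ i, ‖a t i‖)).bddAbove
  refine (isCompact_univ.prod (isCompact_closedBall (0 : ℂ) (max 1 C))).of_isClosed_subset
    (isClosed_eq (by fun_prop) continuous_const) fun q hq => ⟨trivial, ?_⟩
  exact mem_closedBall_zero_iff.2 ((norm_le_of_pow_add_sum_mul_pow_eq_zero hq).trans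
    (max_le_max le_rfl (hC ⟨q.1, rfl⟩)))

theorem hasDerivAt_pow_add_sum_mul_pow {𝕜 : Type*} [NontriviallyNormedField 𝕜]
    (c : Fin n → 𝕜) (z : 𝕜) : HasDerivAt (fun w => w ^ n + ∑ i, c i * w ^ (i : ℕ))
      (n * z ^ (n - 1) + ∑ i, c i * ((i : ℕ) * z ^ ((i : ℕ) - 1))) z :=
  (hasDerivAt_pow n z).add (.fun_sum fun _ _ => (hasDerivAt_pow _ z).const_mul _)

theorem hasDerivAt_pow_add_sum_mul_pow_of_coeff {a : ℝ → Fin n → ℂ} {a' : Fin n → ℂ}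
    {t : ℝ} (ha : HasDerivAt a a' t) (z : ℂ) :
    HasDerivAt (fun s => z ^ n + ∑ i, a s i * z ^ (i : ℕ)) (∑ i, a' i * z ^ (i : ℕ)) t :=
  (HasDerivAt.fun_sum fun i _ => (hasDerivAt_pi.1 ha i).mul_const _).const_add _

end MonicFamily

theorem stmt_8_general (n : ℕ) (a : ℝ → Fin n → ℂ) (ha : ContDiff ℝ 1 a)
    (p : ℝ → ℂ → ℂ)
    (hp : ∀ t z, p t z = z ^ n + ∑ i : Fin n, a t i * z ^ (i : ℕ))
    (hsep : ∀ t ∈ Set.Icc (0:ℝ) 1, ∀ z : ℂ, p t z = 0 → deriv (p t) z ≠ 0)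
    (z₀ : ℂ) (hz₀ : p 0 z₀ = 0) :
    ∃ z : ℝ → ℂ,
      (ContinuousOn z (Set.Icc 0 1) ∧ z 0 = z₀ ∧
        ∀ t ∈ Set.Icc (0:ℝ) 1, p t (z t) = 0) ∧
      (∀ w : ℝ → ℂ, ContinuousOn w (Set.Icc 0 1) → w 0 = z₀ →
        (∀ t ∈ Set.Icc (0:ℝ) 1, p t (w t) = 0) → Set.EqOn w z (Set.Icc 0 1)) ∧
      ContDiffOn ℝ 1 z (Set.Icc 0 1) ∧
      ∀ t ∈ Set.Icc (0:ℝ) 1,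
        derivWithin z (Set.Icc 0 1) t =
          -(deriv (fun s : ℝ => p s (z t)) t) / deriv (p t) (z t) := by
  set A : ℝ → ℂ → ℂ := fun t z => ∑ i, deriv a t i * z ^ (i : ℕ)
  set B : ℝ → ℂ → ℂ :=
    fun t z => n * z ^ (n - 1) + ∑ i, a t i * ((i : ℕ) * z ^ ((i : ℕ) - 1))
  have hA (t : ℝ) (z : ℂ) : HasDerivAt (p · z) (A t z) t :=
    (funext fun s => hp s z : (p · z) = _) ▸
      hasDerivAt_pow_add_sum_mul_pow_of_coeff (ha.differentiable one_ne_zero t).hasDerivAt z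
  have hB (t : ℝ) (z : ℂ) : HasDerivAt (p t) (B t z) z :=
    (funext (hp t) : p t = _) ▸ hasDerivAt_pow_add_sum_mul_pow (a t) z
  have hAc : Continuous ↿A := by
    have := ha.continuous_deriv le_rfl
    simp only [A]; fun_prop
  have hBc : Continuous ↿B := by
    have := ha.continuous
    simp only [B]; fun_prop
  have hsepB : ∀ t ∈ Icc (0 : ℝ) 1, ∀ z, p t z = 0 → B t z ≠ 0 := fun t ht z hz =>
    (hB t z).deriv ▸ hsep t ht z hz
  have hK : IsCompact {q : I × ℂ | p q.1 q.2 = 0} := by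
    simpa only [hp] using isCompact_roots_pow_add_sum_mul_pow ha.continuous
  obtain ⟨z, ⟨hzc, hz0, hzroot⟩, huniq⟩ :=
    (isLocallyGraph_roots hA hB hAc hBc hsepB).exists_unique_path (R := (p · · = 0)) hK hz₀
  have hB₀ (t) (ht : t ∈ Icc (0 : ℝ) 1) : B t (z t) ≠ 0 := hsepB t ht _ (hzroot t ht)
  refine ⟨z, ⟨hzc, hz0, hzroot⟩, huniq,
    contDiffOn_of_root_path hA hB hAc hBc (uniqueDiffOn_Icc zero_lt_one) hzc hzroot hB₀,
    fun t ht => ?_⟩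
  rw [(hA t (z t)).deriv, (hB t (z t)).deriv, neg_div]
  exact (hasDerivWithinAt_of_root_path hA hB hAc hBc (hzc t ht) hzroot ht (hB₀ t ht)
    ).derivWithin (uniqueDiffOn_Icc zero_lt_one t ht)

/-- Homotopy path-lifting for univariate monic polynomials: if
`p_t(z) = zⁿ + a_{n-1}(t)z^{n-1} + ⋯ + a₀(t)` is a `C¹` family of monic polynomials
(`a : ℝ → ℂⁿ` of class `C¹`) which is separable for every `t ∈ [0,1]`
(no repeated root, i.e. the path avoids the discriminant locus), then every root `z₀`
of `p₀` lifts to a unique continuous path of roots `z : [0,1] → ℂ`, which is moreover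
continuously differentiable and satisfies `z′(t) = −(∂p_t/∂t)(z(t)) / p_t′(z(t))`. -/
theorem stmt_8 (n : ℕ) (hn : 1 ≤ n) (a : ℝ → Fin n → ℂ) (ha : ContDiff ℝ 1 a)
    (p : ℝ → ℂ → ℂ)
    (hp : ∀ t z, p t z = z ^ n + ∑ i : Fin n, a t i * z ^ (i : ℕ))
    (hsep : ∀ t ∈ Set.Icc (0:ℝ) 1, ∀ z : ℂ, p t z = 0 → deriv (p t) z ≠ 0)
    (z₀ : ℂ) (hz₀ : p 0 z₀ = 0) :
    ∃ z : ℝ → ℂ,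
      (ContinuousOn z (Set.Icc 0 1) ∧ z 0 = z₀ ∧
        ∀ t ∈ Set.Icc (0:ℝ) 1, p t (z t) = 0) ∧
      (∀ w : ℝ → ℂ, ContinuousOn w (Set.Icc 0 1) → w 0 = z₀ →
        (∀ t ∈ Set.Icc (0:ℝ) 1, p t (w t) = 0) → Set.EqOn w z (Set.Icc 0 1)) ∧
      ContDiffOn ℝ 1 z (Set.Icc 0 1) ∧
      ∀ t ∈ Set.Icc (0:ℝ) 1,
        derivWithin z (Set.Icc 0 1) t =
          -(deriv (fun s : ℝ => p s (z t)) t) / deriv (p t) (z t) :=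
  stmt_8_general n a ha p hp hsep z₀ hz₀
end
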